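/- Let A and B be integral domains, J an ideal of B, and f : A → B a non-injective ring homomorphism. Then the following are equivalent: (1) A ⋈^f J is an Hermite ring; (2) A ⋈^f J is a Bézout ring; (3) either J = B and A and B are Bézout rings, or J = 0 and A is a Bézout ring. -/

import Mathlib

/-
If `f a = 0` with `a ≠ 0` and `0 ≠ j ∈ J`, let `d` be a generator of the ideal of `A ⋈^f J`
spanned by `(a, 0)` and `(0, j)`. Since `d` divides `(a, 0)`, its first coordinate is nonzero, so
the cofactor `v` with `(0, j) = v d` has first coordinate `0`, whence `v₂ ∈ J`. Since `d` is a
combination `s (a, 0) + t (0, j)`, also `j = v₂ t₂ j`, so `v₂` is a unit and `J = B`. Hence a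
Bézout amalgamation is `A ⋈^f 0 ≅ A` or `A ⋈^f B ≅ A × B`, and for Bézout domains `A`, `B` both
of these are Hermite.
-/

/-- A commutative ring is an elementary divisor ring if every square matrix is
equivalent to a diagonal matrix via invertible matrices. -/
def IsElementaryDivisorRing (R : Type*) [CommRing R] : Prop :=
  ∀ (n : ℕ) (M : Matrix (Fin n) (Fin n) R),
    ∃ P Q : Matrix (Fin n) (Fin n) R, IsUnit P ∧ IsUnit Q ∧
      ∃ d : Fin n → R, P * M * Q = Matrix.diagonal d

/-- A commutative ring is Hermite if any pair `a, b` can be written `a = a₁d`,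
`b = b₁d` with `Ra₁ + Rb₁ = R`. -/
def IsHermiteRing (R : Type*) [CommRing R] : Prop :=
  ∀ a b : R, ∃ a₁ b₁ d : R, a = a₁ * d ∧ b = b₁ * d ∧ Ideal.span {a₁, b₁} = ⊤

/-- The amalgamation `A ⋈^f J = {(a, f a + j) | a ∈ A, j ∈ J}` as a subring of `A × B`. -/
def amalgamation {A B : Type*} [CommRing A] [CommRing B] (f : A →+* B) (J : Ideal B) :
    Subring (A × B) where
  carrier := {p | p.2 - f p.1 ∈ J}
  mul_mem' := by
    intro p q hp hq
    have h : (p * q).2 - f (p * q).1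
        = p.2 * (q.2 - f q.1) + f q.1 * (p.2 - f p.1) := by
      simp only [Prod.fst_mul, Prod.snd_mul, map_mul]; ring
    show (p * q).2 - f (p * q).1 ∈ J
    rw [h]
    exact J.add_mem (J.mul_mem_left _ hq) (J.mul_mem_left _ hp)
  one_mem' := by simp
  add_mem' := by
    intro p q hp hq
    have h : (p + q).2 - f (p + q).1 = (p.2 - f p.1) + (q.2 - f q.1) := by
      simp only [Prod.fst_add, Prod.snd_add, map_add]; ring
    show (p + q).2 - f (p + q).1 ∈ J
    rw [h]
    exact J.add_mem hp hq
  zero_mem' := by simp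
  neg_mem' := by
    intro p hp
    have h : (-p).2 - f (-p).1 = -(p.2 - f p.1) := by
      simp only [Prod.fst_neg, Prod.snd_neg, map_neg]; ring
    show (-p).2 - f (-p).1 ∈ J
    rw [h]
    exact J.neg_mem hp

/-- The subring `f(A) + J` of `B`. -/
def rangeAddIdeal {A B : Type*} [CommRing A] [CommRing B] (f : A →+* B) (J : Ideal B) :
    Subring B where
  carrier := {b | ∃ a, b - f a ∈ J}
  mul_mem' := by
    rintro b b' ⟨a, ha⟩ ⟨a', ha'⟩
    refine ⟨a * a', ?_⟩
    have h : b * b' - f (a * a') = b * (b' - f a') + f a' * (b - f a) := by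
      simp only [map_mul]; ring
    show b * b' - f (a * a') ∈ J
    rw [h]
    exact J.add_mem (J.mul_mem_left _ ha') (J.mul_mem_left _ ha)
  one_mem' := ⟨1, by simp⟩
  add_mem' := by
    rintro b b' ⟨a, ha⟩ ⟨a', ha'⟩
    refine ⟨a + a', ?_⟩
    have h : b + b' - f (a + a') = (b - f a) + (b' - f a') := by
      simp only [map_add]; ring
    show b + b' - f (a + a') ∈ J
    rw [h]
    exact J.add_mem ha ha'
  zero_mem' := ⟨0, by simp⟩
  neg_mem' := by
    rintro b ⟨a, ha⟩
    refine ⟨-a, ?_⟩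
    have h : -b - f (-a) = -(b - f a) := by simp only [map_neg]; ring
    show -b - f (-a) ∈ J
    rw [h]
    exact J.neg_mem ha


theorem Ideal.span_pair_eq_top_iff_isCoprime {R : Type*} [CommRing R] (x y : R) :
    Ideal.span {x, y} = ⊤ ↔ IsCoprime x y := by
  rw [Ideal.span_insert, Ideal.sup_eq_top_iff_isCoprime]

theorem IsCoprime.prodMk {R S : Type*} [CommRing R] [CommRing S] {a₁ b₁ : R} {a₂ b₂ : S}
    (h₁ : IsCoprime a₁ b₁) (h₂ : IsCoprime a₂ b₂) : IsCoprime (a₁, a₂) (b₁, b₂) := by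
  obtain ⟨u₁, v₁, h₁⟩ := h₁
  obtain ⟨u₂, v₂, h₂⟩ := h₂
  exact ⟨(u₁, u₂), (v₁, v₂), Prod.ext h₁ h₂⟩

namespace IsHermiteRing

variable {R S : Type*} [CommRing R] [CommRing S]

theorem iff_isCoprime : IsHermiteRing R ↔
    ∀ a b : R, ∃ a₁ b₁ d : R, a = a₁ * d ∧ b = b₁ * d ∧ IsCoprime a₁ b₁ := by
  simp only [IsHermiteRing, Ideal.span_pair_eq_top_iff_isCoprime]

theorem isBezout (h : IsHermiteRing R) : IsBezout R := by
  refine IsBezout.iff_span_pair_isPrincipal.mpr fun x y => ?_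
  obtain ⟨a₁, b₁, d, rfl, rfl, hspan⟩ := h x y
  refine ⟨d, ?_⟩
  rw [Ideal.submodule_span_eq, ← Ideal.top_mul (Ideal.span {d}), ← hspan, Ideal.span_mul_span',
    Set.mul_singleton, Set.image_pair]

theorem of_isBezout [IsDomain R] [IsBezout R] : IsHermiteRing R := by
  refine iff_isCoprime.mpr fun a b => ?_
  obtain ⟨a₁, ha₁⟩ := IsBezout.gcd_dvd_left a b
  obtain ⟨b₁, hb₁⟩ := IsBezout.gcd_dvd_right a b
  obtain ⟨u, v, huv⟩ := IsBezout.gcd_eq_sum a b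
  by_cases hd : IsBezout.gcd a b = 0
  · rw [hd, zero_mul] at ha₁ hb₁
    exact ⟨1, 1, 0, by simp [ha₁], by simp [hb₁], isCoprime_one_left⟩
  · refine ⟨a₁, b₁, IsBezout.gcd a b, ha₁.trans (mul_comm _ _),
      hb₁.trans (mul_comm _ _), u, v, ?_⟩
    exact mul_left_cancel₀ hd (by linear_combination -u * ha₁ - v * hb₁ + huv)

theorem of_surjective (h : IsHermiteRing R) (g : R →+* S) (hg : Function.Surjective g) :
    IsHermiteRing S := by
  refine iff_isCoprime.mpr fun a b => ?_
  obtain ⟨a, rfl⟩ := hg a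
  obtain ⟨b, rfl⟩ := hg b
  obtain ⟨a₁, b₁, d, rfl, rfl, hcop⟩ := iff_isCoprime.mp h a b
  exact ⟨g a₁, g b₁, g d, map_mul g _ _, map_mul g _ _, hcop.map g⟩

theorem prod (hR : IsHermiteRing R) (hS : IsHermiteRing S) : IsHermiteRing (R × S) := by
  refine iff_isCoprime.mpr fun a b => ?_
  obtain ⟨a₁, b₁, d, ha, hb, h₁⟩ := iff_isCoprime.mp hR a.1 b.1
  obtain ⟨a₂, b₂, e, ha', hb', h₂⟩ := iff_isCoprime.mp hS a.2 b.2
  exact ⟨(a₁, a₂), (b₁, b₂), (d, e), Prod.ext ha ha', Prod.ext hb hb', h₁.prodMk h₂⟩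

end IsHermiteRing

section Amalgamation

variable {A B : Type*} [CommRing A] [CommRing B]

@[simp]
theorem mem_amalgamation {f : A →+* B} {J : Ideal B} {p : A × B} :
    p ∈ amalgamation f J ↔ p.2 - f p.1 ∈ J := Iff.rfl

def amalgamationBotEquiv (f : A →+* B) : A ≃+* amalgamation f ⊥ where
  toFun a := ⟨(a, f a), by simp⟩
  invFun p := p.1.1
  left_inv _ := rfl
  right_inv := by
    rintro ⟨⟨a, b⟩, hab⟩
    obtain rfl : b = f a := by simpa [sub_eq_zero] using hab
    rfl
  map_mul' a b := Subtype.ext (Prod.ext rfl (map_mul f a b))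
  map_add' a b := Subtype.ext (Prod.ext rfl (map_add f a b))

theorem amalgamation_top (f : A →+* B) : amalgamation f ⊤ = ⊤ := by
  ext p; simp

def amalgamationTopEquiv (f : A →+* B) : amalgamation f ⊤ ≃+* A × B :=
  (RingEquiv.subringCongr (amalgamation_top f)).trans Subring.topEquiv

theorem eq_bot_or_eq_top_of_isBezout_amalgamation [IsDomain A] [IsDomain B] {f : A →+* B}
    (hf : ¬Function.Injective f) (J : Ideal B) [IsBezout (amalgamation f J)] :
    J = ⊥ ∨ J = ⊤ := by
  refine or_iff_not_imp_left.mpr fun hJ => ?_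
  obtain ⟨a, hfa, ha⟩ : ∃ a, f a = 0 ∧ a ≠ 0 := by
    simpa [injective_iff_map_eq_zero] using hf
  obtain ⟨j, hj, hj0⟩ := J.ne_bot_iff.mp hJ
  let x : amalgamation f J := ⟨(a, 0), by simp [hfa]⟩
  let y : amalgamation f J := ⟨(0, j), by simpa⟩
  set d := IsBezout.gcd x y
  obtain ⟨u, hu⟩ := IsBezout.gcd_dvd_left x y
  obtain ⟨v, hv⟩ := IsBezout.gcd_dvd_right x y
  obtain ⟨s, t, hst⟩ := IsBezout.gcd_eq_sum x y
  have hu₁ : a = d.1.1 * u.1.1 := congrArg (fun z => z.1.1) hu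
  have hv₁ : 0 = d.1.1 * v.1.1 := congrArg (fun z => z.1.1) hv
  have hv₂ : j = d.1.2 * v.1.2 := congrArg (fun z => z.1.2) hv
  have hst₂ : s.1.2 * 0 + t.1.2 * j = d.1.2 := congrArg (fun z => z.1.2) hst
  have hv₁_zero : v.1.1 = 0 :=
    (mul_eq_zero.mp hv₁.symm).resolve_left fun h => ha (by rw [hu₁, h, zero_mul])
  have hvJ : v.1.2 ∈ J := by simpa [hv₁_zero] using mem_amalgamation.mp v.2
  have hvt : v.1.2 * t.1.2 = 1 := by
    refine sub_eq_zero.mp ((mul_eq_zero.mp ?_).resolve_right hj0)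
    linear_combination v.1.2 * hst₂ - hv₂
  exact J.eq_top_of_isUnit_mem hvJ (.of_mul_eq_one _ hvt)

theorem isHermiteRing_amalgamation_top [IsDomain A] [IsDomain B] [IsBezout A] [IsBezout B]
    (f : A →+* B) : IsHermiteRing (amalgamation f ⊤) :=
  (IsHermiteRing.of_isBezout.prod IsHermiteRing.of_isBezout).of_surjective
    (amalgamationTopEquiv f).symm.toRingHom (amalgamationTopEquiv f).symm.surjective

theorem isHermiteRing_amalgamation_bot [IsDomain A] [IsBezout A] (f : A →+* B) :
    IsHermiteRing (amalgamation f ⊥) :=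
  IsHermiteRing.of_isBezout.of_surjective (amalgamationBotEquiv f).toRingHom
    (amalgamationBotEquiv f).surjective

end Amalgamation

theorem stmt19 {A B : Type*} [CommRing A] [IsDomain A] [CommRing B] [IsDomain B]
    (f : A →+* B) (hf : ¬ Function.Injective f) (J : Ideal B) :
    (IsHermiteRing (amalgamation f J) ↔ IsBezout (amalgamation f J)) ∧
    (IsBezout (amalgamation f J) ↔
      (J = ⊤ ∧ IsBezout A ∧ IsBezout B) ∨
      (J = ⊥ ∧ IsBezout A)) := by
  have hHermite : (J = ⊤ ∧ IsBezout A ∧ IsBezout B) ∨ (J = ⊥ ∧ IsBezout A) →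
      IsHermiteRing (amalgamation f J) := by
    rintro (⟨rfl, _, _⟩ | ⟨rfl, _⟩)
    · exact isHermiteRing_amalgamation_top f
    · exact isHermiteRing_amalgamation_bot f
  have hBezout : IsBezout (amalgamation f J) →
      (J = ⊤ ∧ IsBezout A ∧ IsBezout B) ∨ (J = ⊥ ∧ IsBezout A) := by
    intro _
    rcases eq_bot_or_eq_top_of_isBezout_amalgamation hf J with rfl | rfl
    · exact .inr ⟨rfl, Function.Surjective.isBezout
        (amalgamationBotEquiv f).symm.toRingHom (amalgamationBotEquiv f).symm.surjective⟩
    · have : IsBezout (A × B) := Function.Surjective.isBezout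
        (amalgamationTopEquiv f).toRingHom (amalgamationTopEquiv f).surjective
      exact .inl ⟨rfl, Function.Surjective.isBezout (RingHom.fst A B) Prod.fst_surjective,
        Function.Surjective.isBezout (RingHom.snd A B) Prod.snd_surjective⟩
  exact ⟨⟨IsHermiteRing.isBezout, fun h => hHermite (hBezout h)⟩, hBezout,
    fun h => (hHermite h).isBezout⟩
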